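/- Let n ≥ 1 and let A, B ⊆ ℝ^n be closed subsets. Assume that the restriction s|_{A×B} : A × B → ℝ^n of the addition map is proper, and that for every x ∈ A + B the fiber {(a,b) ∈ A × B : a + b = x} is contractible. Then A + B is closed in ℝ^n, and the pushforward along s|_{A×B} of the constant sheaf k_{A×B} is isomorphic, as a sheaf of k-vector spaces on ℝ^n, to the pushforward along the inclusion A + B ↪ ℝ^n of the constant sheaf k_{A+B}. -/

import Mathlib

open CategoryTheory TopologicalSpace Set Topology

noncomputable section

variable (k : Type) [Field k]

/-- The support of the function `s : V ∩ I → k` is closed in `V`. -/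
def SuppClosedIn (I V : Set ℝ) (s : ↥(V ∩ I) → k) : Prop :=
  ∀ x ∈ V, x ∈ closure {y : ℝ | ∃ h : y ∈ V ∩ I, s ⟨y, h⟩ ≠ 0} →
    ∃ h : x ∈ V ∩ I, s ⟨x, h⟩ ≠ 0

lemma zero_locConst (I V : Set ℝ) :
    IsLocallyConstant (0 : ↥(V ∩ I) → k) ∧ SuppClosedIn k I V 0 := by
  constructor
  · exact IsLocallyConstant.const 0
  · intro x _ hx
    exfalso
    have h0 : {y : ℝ | ∃ h : y ∈ V ∩ I, (0 : ↥(V ∩ I) → k) ⟨y, h⟩ ≠ 0} = ∅ := by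
      ext y; simp
    rw [h0, closure_empty] at hx
    exact hx

/-- The sections over `V` of the sheaf `k_I`: locally constant functions on `V ∩ I`
whose support is closed in `V`. -/
def secSub (I V : Set ℝ) : Submodule k (↥(V ∩ I) → k) where
  carrier := {s | IsLocallyConstant s ∧ SuppClosedIn k I V s}
  zero_mem' := zero_locConst k I V
  add_mem' := by
    rintro s t ⟨hslc, hscl⟩ ⟨htlc, htcl⟩
    have hlc : IsLocallyConstant (s + t) := hslc.comp₂ htlc (· + ·)
    refine ⟨hlc, ?_⟩
    intro x hxV hxcl
    have hsub : {y : ℝ | ∃ h : y ∈ V ∩ I, (s + t) ⟨y, h⟩ ≠ 0}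
        ⊆ {y : ℝ | ∃ h : y ∈ V ∩ I, s ⟨y, h⟩ ≠ 0}
          ∪ {y : ℝ | ∃ h : y ∈ V ∩ I, t ⟨y, h⟩ ≠ 0} := by
      rintro y ⟨h, hy⟩
      by_cases hsy : s ⟨y, h⟩ = 0
      · refine Or.inr ⟨h, fun h0 => hy ?_⟩
        show s ⟨y, h⟩ + t ⟨y, h⟩ = 0
        rw [hsy, h0, add_zero]
      · exact Or.inl ⟨h, hsy⟩
    have hxVI : x ∈ V ∩ I := by
      have hcl2 := closure_mono hsub hxcl
      rw [closure_union] at hcl2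
      rcases hcl2 with h | h
      · exact (hscl x hxV h).choose
      · exact (htcl x hxV h).choose
    refine ⟨hxVI, ?_⟩
    have hA : IsClosed {y : ↥(V ∩ I) | (s + t) y ≠ 0} := by
      have h1 : IsOpen ((s + t) ⁻¹' {0}) := hlc {0}
      have h2 := h1.isClosed_compl
      have h3 : ((s + t) ⁻¹' {0})ᶜ = {y : ↥(V ∩ I) | (s + t) y ≠ 0} := by
        ext y; simp
      exact h3 ▸ h2
    have hmem : (⟨x, hxVI⟩ : ↥(V ∩ I)) ∈ closure {y : ↥(V ∩ I) | (s + t) y ≠ 0} := by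
      rw [closure_subtype]
      have himg : Subtype.val '' {y : ↥(V ∩ I) | (s + t) y ≠ 0}
          = {y : ℝ | ∃ h : y ∈ V ∩ I, (s + t) ⟨y, h⟩ ≠ 0} := by
        ext y
        constructor
        · rintro ⟨z, hz, rfl⟩; exact ⟨z.2, hz⟩
        · rintro ⟨h, hy⟩; exact ⟨⟨y, h⟩, hy, rfl⟩
      rw [himg]
      exact hxcl
    have := hA.closure_eq ▸ hmem
    exact this
  smul_mem' := by
    intro c s hs
    rcases hs with ⟨hlc, hcl⟩
    by_cases hc : c = 0
    · subst hc
      rw [zero_smul]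
      exact zero_locConst k I V
    · constructor
      · exact hlc.comp (fun a => c • a)
      · intro x hxV hxcl
        have hset : {y : ℝ | ∃ h : y ∈ V ∩ I, (c • s) ⟨y, h⟩ ≠ 0}
            = {y : ℝ | ∃ h : y ∈ V ∩ I, s ⟨y, h⟩ ≠ 0} := by
          ext y
          constructor
          · rintro ⟨h, hy⟩
            refine ⟨h, fun h0 => hy ?_⟩
            show c • s ⟨y, h⟩ = 0
            rw [h0, smul_zero]
          · rintro ⟨h, hy⟩
            exact ⟨h, by simpa [smul_eq_zero, hc] using hy⟩
        rw [hset] at hxcl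
        obtain ⟨h, hy⟩ := hcl x hxV hxcl
        exact ⟨h, by simpa [smul_eq_zero, hc] using hy⟩
/-- Restriction of sections. -/
def resFun (I : Set ℝ) {V W : Set ℝ} (h : W ⊆ V) (s : ↥(V ∩ I) → k) : ↥(W ∩ I) → k :=
  fun y => s ⟨y.1, ⟨h y.2.1, y.2.2⟩⟩

lemma resFun_mem (I : Set ℝ) {V W : Set ℝ} (h : W ⊆ V) (s : ↥(V ∩ I) → k)
    (hs : s ∈ secSub k I V) : resFun k I h s ∈ secSub k I W := by
  obtain ⟨hlc, hcl⟩ := hs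
  constructor
  · exact hlc.comp_continuous (Continuous.subtype_mk continuous_subtype_val _)
  · intro x hxW hxcl
    have hsub : {y : ℝ | ∃ h' : y ∈ W ∩ I, resFun k I h s ⟨y, h'⟩ ≠ 0}
        ⊆ {y : ℝ | ∃ h' : y ∈ V ∩ I, s ⟨y, h'⟩ ≠ 0} := by
      rintro y ⟨h', hy⟩
      exact ⟨⟨h h'.1, h'.2⟩, hy⟩
    obtain ⟨hxVI, hne⟩ := hcl x (h hxW) (closure_mono hsub hxcl)
    exact ⟨⟨hxW, hxVI.2⟩, hne⟩

/-- Restriction as a linear map. -/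
def resLM (I : Set ℝ) {V W : Set ℝ} (h : W ⊆ V) : secSub k I V →ₗ[k] secSub k I W where
  toFun s := ⟨resFun k I h s.1, resFun_mem k I h s.1 s.2⟩
  map_add' s t := rfl
  map_smul' c s := rfl

/-- The presheaf `k_I` on `ℝ`. -/
def intervalPresheaf (I : Set ℝ) : TopCat.Presheaf (ModuleCat.{0} k) (TopCat.of ℝ) where
  obj V := ModuleCat.of k (secSub k I V.unop.1)
  map {V W} f := ModuleCat.ofHom (resLM k I (leOfHom f.unop))
  map_id V := rfl
  map_comp f g := rfl
theorem intervalPresheaf_isSheaf (I : Set ℝ) : (intervalPresheaf k I).IsSheaf := by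
  classical
  rw [TopCat.Presheaf.isSheaf_iff_isSheafUniqueGluing]
  intro ι U sf hcomp
  change (i : ι) → secSub k I (U i).1 at sf
  -- pointwise compatibility
  have key : ∀ (i j : ι) (x : ℝ) (hxi : x ∈ (U i).1 ∩ I) (hxj : x ∈ (U j).1 ∩ I),
      (sf i).1 ⟨x, hxi⟩ = (sf j).1 ⟨x, hxj⟩ := by
    intro i j x hxi hxj
    have h := hcomp i j
    have hmem : x ∈ (U i ⊓ U j).1 ∩ I := ⟨⟨hxi.1, hxj.1⟩, hxi.2⟩
    have h2 := congrFun (congrArg Subtype.val h) ⟨x, hmem⟩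
    exact h2
  have hmemS : ∀ x : ↥((iSup U : Opens (TopCat.of ℝ)).1 ∩ I), ∃ i, x.1 ∈ U i := by
    intro x
    exact Opens.mem_iSup.mp x.2.1
  set idx : ↥((iSup U : Opens (TopCat.of ℝ)).1 ∩ I) → ι := fun x => (hmemS x).choose with hidxdef
  have hidx : ∀ x, x.1 ∈ U (idx x) := fun x => (hmemS x).choose_spec
  set s₀ : ↥((iSup U : Opens (TopCat.of ℝ)).1 ∩ I) → k :=
    fun x => (sf (idx x)).1 ⟨x.1, ⟨hidx x, x.2.2⟩⟩ with hs₀def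
  have hs₀ : ∀ (x : ↥((iSup U : Opens (TopCat.of ℝ)).1 ∩ I)) (i : ι) (hx : x.1 ∈ U i),
      s₀ x = (sf i).1 ⟨x.1, ⟨hx, x.2.2⟩⟩ :=
    fun x i hx => key (idx x) i x.1 ⟨hidx x, x.2.2⟩ ⟨hx, x.2.2⟩
  have hlc : IsLocallyConstant s₀ := by
    rw [IsLocallyConstant.iff_exists_open]
    intro x
    obtain ⟨i, hi⟩ := hmemS x
    have hlci : IsLocallyConstant ((sf i).1 : ↥((U i).1 ∩ I) → k) := (sf i).2.1
    obtain ⟨W, hWopen, hpW, hWconst⟩ := hlci.exists_open (⟨x.1, ⟨hi, x.2.2⟩⟩ : ↥((U i).1 ∩ I))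
    obtain ⟨O, hOopen, hWO⟩ := isOpen_induced_iff.mp hWopen
    subst hWO
    refine ⟨Subtype.val ⁻¹' (O ∩ (U i).1), (hOopen.inter (U i).2).preimage continuous_subtype_val,
      ⟨hpW, hi⟩, ?_⟩
    intro y hy
    have hyi : y.1 ∈ U i := hy.2
    rw [hs₀ y i hyi, hs₀ x i hi]
    exact hWconst ⟨y.1, ⟨hyi, y.2.2⟩⟩ hy.1
  have hscl : SuppClosedIn k I (iSup U : Opens (TopCat.of ℝ)).1 s₀ := by
    intro x hxS hxcl
    obtain ⟨i, hi⟩ := Opens.mem_iSup.mp hxS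
    have h1 : x ∈ closure ({y : ℝ | ∃ h : y ∈ (iSup U : Opens (TopCat.of ℝ)).1 ∩ I, s₀ ⟨y, h⟩ ≠ 0}
        ∩ (U i).1) := by
      rw [mem_closure_iff] at hxcl ⊢
      intro O hO hxO
      obtain ⟨z, hz⟩ := hxcl (O ∩ (U i).1) (hO.inter (U i).2) ⟨hxO, hi⟩
      exact ⟨z, hz.1.1, hz.2, hz.1.2⟩
    have hsub : {y : ℝ | ∃ h : y ∈ (iSup U : Opens (TopCat.of ℝ)).1 ∩ I, s₀ ⟨y, h⟩ ≠ 0}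
        ∩ (U i).1 ⊆ {y : ℝ | ∃ h : y ∈ (U i).1 ∩ I, (sf i).1 ⟨y, h⟩ ≠ 0} := by
      rintro y ⟨⟨hy, hne⟩, hyi⟩
      refine ⟨⟨hyi, hy.2⟩, ?_⟩
      rw [← hs₀ ⟨y, hy⟩ i hyi]
      exact hne
    obtain ⟨hyUI, hne⟩ := (sf i).2.2 x hi (closure_mono hsub h1)
    refine ⟨⟨hxS, hyUI.2⟩, ?_⟩
    rw [hs₀ ⟨x, ⟨hxS, hyUI.2⟩⟩ i hyUI.1]
    exact hne
  refine ⟨⟨s₀, hlc, hscl⟩, ?_, ?_⟩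
  · intro i
    apply Subtype.ext
    funext y
    exact hs₀ ⟨y.1, ⟨leOfHom (Opens.leSupr U i) y.2.1, y.2.2⟩⟩ i y.2.1
  · intro t ht
    apply Subtype.ext
    funext x
    have h := ht (idx x)
    have h2 := congrFun (congrArg Subtype.val h) ⟨x.1, ⟨hidx x, x.2.2⟩⟩
    exact h2

/-- The sheaf `k_I` on `ℝ` for an interval `I`: locally constant functions on `V ∩ I`
whose support is closed in `V`. -/
def intervalSheaf (I : Set ℝ) :
    Sheaf (Opens.grothendieckTopology (TopCat.of ℝ)) (ModuleCat.{0} k) :=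
  ⟨intervalPresheaf k I, intervalPresheaf_isSheaf k I⟩
/-- The category of sheaves of `k`-vector spaces on `ℝ`. -/
abbrev RealSheafCat := Sheaf (Opens.grothendieckTopology (TopCat.of ℝ)) (ModuleCat.{0} k)

instance sheafHomSMul (F G : RealSheafCat k) : SMul k (F ⟶ G) :=
  ⟨fun c f => ⟨c • f.hom⟩⟩

instance sheafHomModule (F G : RealSheafCat k) : Module k (F ⟶ G) :=
  Function.Injective.module k
    { toFun := fun f : F ⟶ G => f.hom
      map_zero' := rfl
      map_add' := fun _ _ => rfl }
    (fun _ _ h => Sheaf.hom_ext h) (fun _ _ => rfl)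

instance : HasExt.{1} (RealSheafCat k) := by
  letI := HasDerivedCategory.standard (RealSheafCat k)
  exact hasExt_of_hasDerivedCategory _

/-- The interval `(a, b)` with possibly infinite endpoints. -/
def Ioo' (a b : EReal) : Set ℝ := {x : ℝ | a < (x : EReal) ∧ (x : EReal) < b}

/-- The interval `[a, b)` with a possibly infinite right endpoint. -/
def Ico' (a : ℝ) (b : EReal) : Set ℝ := {x : ℝ | a ≤ x ∧ (x : EReal) < b}

/-- The interval `(a, b]` with a possibly infinite left endpoint. -/
def Ioc' (a : EReal) (b : ℝ) : Set ℝ := {x : ℝ | a < (x : EReal) ∧ x ≤ b}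

/-- Identification of sheaves on the topological space `ℝ` with objects of `RealSheafCat`. -/
def toRS (F : TopCat.Sheaf (ModuleCat.{0} k) (TopCat.of ℝ)) : RealSheafCat k := F


/-!
Constant sheaves are modelled by sheaves of locally constant functions, which receive a
locally bijective morphism from the constant presheaf. The corestriction `t : A × B → A + B`
of the addition map is proper, and it is surjective with connected fibres because its fibres
are contractible. Over every open `U ⊆ A + B` it therefore restricts to a quotient map
`t⁻¹ U → U` with connected fibres, along which locally constant functions descend uniquely;
this gives `t_* k_{A×B} ≅ k_{A+B}`, and pushing forward along `A + B ↪ ℝⁿ` gives the claim.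
The set `A + B` is closed because it is the image of a proper map.
-/

theorem LocallyConstant.comap_bijective_of_isQuotientMap {X Y Z : Type*} [TopologicalSpace X]
    [TopologicalSpace Y] {q : C(X, Y)} (hq : IsQuotientMap q)
    (hfib : ∀ y, IsPreconnected (q ⁻¹' {y})) :
    Function.Bijective (LocallyConstant.comap q : LocallyConstant Y Z → LocallyConstant X Z) := by
  refine ⟨LocallyConstant.comap_injective q hq.surjective, fun f ↦ ?_⟩
  have hf : ∀ x, f (Function.surjInv hq.surjective (q x)) = f x := fun x ↦
    f.apply_eq_of_isPreconnected (hfib (q x)) (Function.surjInv_eq hq.surjective (q x)) rfl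
  refine ⟨⟨f ∘ Function.surjInv hq.surjective, fun s ↦ ?_⟩, LocallyConstant.ext hf⟩
  rw [← hq.isOpen_preimage, ← Set.preimage_comp]
  convert f.isLocallyConstant s using 1
  ext x
  simp [hf]

theorem IsPreconnected.preimage_restrictPreimage {X Y : Type*} [TopologicalSpace X] {f : X → Y}
    (s : Set Y) (y : s) (h : IsPreconnected (f ⁻¹' {y.1})) :
    IsPreconnected (s.restrictPreimage f ⁻¹' {y}) := by
  rw [← Topology.IsInducing.subtypeVal.isPreconnected_image,
    Set.image_val_preimage_restrictPreimage, Set.image_singleton]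
  exact h

namespace TopCat

variable (R : Type) [Ring R] (M : Type) [AddCommGroup M] [Module R M]

section

variable (X : TopCat.{0})

def locallyConstantLocal (T : Type*) : LocalPredicate fun _ : X ↦ T where
  pred f := IsLocallyConstant f
  res i _ hf := hf.comp_continuous (Opens.isOpenEmbedding_of_le i.le).continuous
  locality {U} f hloc := by
    refine (IsLocallyConstant.iff_eventually_eq f).2 fun x ↦ ?_
    obtain ⟨V, hxV, i, hf⟩ := hloc x
    have hx : ∀ᶠ y in Filter.map (Set.inclusion i.le) (𝓝 ⟨x, hxV⟩), f y = f x :=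
      Filter.eventually_map.2 ((IsLocallyConstant.iff_eventually_eq _).1 hf ⟨x, hxV⟩)
    rwa [(Opens.isOpenEmbedding_of_le i.le).map_nhds_eq] at hx

def locallyConstantPresheaf : X.Presheaf (ModuleCat.{0} R) where
  obj U := ModuleCat.of R (LocallyConstant U.unop M)
  map i := ModuleCat.ofHom (LocallyConstant.comapₗ R
    ⟨Set.inclusion (leOfHom i.unop), continuous_inclusion (leOfHom i.unop)⟩)

def locallyConstantPresheafCompForgetIso :
    locallyConstantPresheaf R M X ⋙ forget _ ≅
      subpresheafToTypes (locallyConstantLocal X M).toPrelocalPredicate :=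
  NatIso.ofComponents fun U ↦ Equiv.toIso
    (show LocallyConstant U.unop M ≃ {f : U.unop → M // IsLocallyConstant f} from
      { toFun f := ⟨f, f.isLocallyConstant⟩
        invFun f := ⟨f.1, f.2⟩ })

theorem locallyConstantPresheaf_isSheaf : (locallyConstantPresheaf R M X).IsSheaf :=
  (Presheaf.isSheaf_iff_isSheaf_comp (forget _) _).2 <|
    Presheaf.isSheaf_of_iso (locallyConstantPresheafCompForgetIso R M X).symm
      (subpresheafToTypes.isSheaf _)

def locallyConstantSheaf : X.Sheaf (ModuleCat.{0} R) :=
  ⟨locallyConstantPresheaf R M X, locallyConstantPresheaf_isSheaf R M X⟩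

def constToLocallyConstant :
    (Functor.const (Opens X)ᵒᵖ).obj (ModuleCat.of R M) ⟶ locallyConstantPresheaf R M X where
  app _ := ModuleCat.ofHom (LocallyConstant.constₗ R)

instance : CategoryTheory.Presheaf.IsLocallyInjective (Opens.grothendieckTopology X)
    (constToLocallyConstant R M X) where
  equalizerSieve_mem {U} m m' h z hz := by
    obtain rfl : m = m' := DFunLike.congr_fun
      (show LocallyConstant.const U.unop m = LocallyConstant.const U.unop m' from h) ⟨z, hz⟩
    rw [CategoryTheory.Presheaf.equalizerSieve_self_eq_top]
    exact ⟨_, 𝟙 _, True.intro, hz⟩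

instance : CategoryTheory.Presheaf.IsLocallySurjective (Opens.grothendieckTopology X)
    (constToLocallyConstant R M X) := by
  refine (Presheaf.isLocallySurjective_iff _).2 fun U (f : LocallyConstant U M) x hx ↦ ?_
  obtain ⟨_, ⟨O, hO, rfl⟩, hxO, hf⟩ :=
    (IsLocallyConstant.iff_exists_open _).1 f.isLocallyConstant ⟨x, hx⟩
  refine ⟨U ⊓ ⟨O, hO⟩, inf_le_left, ⟨f ⟨x, hx⟩, ?_⟩, hx, hxO⟩
  exact LocallyConstant.ext fun ⟨y, hyU, hyO⟩ ↦ (hf ⟨y, hyU⟩ hyO).symm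

def constantSheafIsoLocallyConstantSheaf :
    (constantSheaf (Opens.grothendieckTopology X) (ModuleCat.{0} R)).obj (ModuleCat.of R M) ≅
      locallyConstantSheaf R M X :=
  @asIso _ _ _ _ ((presheafToSheaf _ _).map (constToLocallyConstant R M X))
      ((GrothendieckTopology.W_iff _ _).1 (GrothendieckTopology.W_of_isLocallyBijective _ _)) ≪≫
    @asIso _ _ _ _ ((sheafificationAdjunction _ _).counit.app (locallyConstantSheaf R M X))
      (isIso_sheafificationAdjunction_counit _)

end

def locallyConstantSheafIsoPushforward {X Y : TopCat.{0}} (f : X ⟶ Y) (hf : IsQuotientMap f)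
    (hfib : ∀ y, IsPreconnected (f ⁻¹' {y})) :
    locallyConstantSheaf R M Y ≅
      (Sheaf.pushforward (ModuleCat.{0} R) f).obj (locallyConstantSheaf R M X) :=
  (sheafToPresheaf _ _).preimageIso <| NatIso.ofComponents
    (fun U ↦ (LinearEquiv.ofBijective
      (LocallyConstant.comapₗ R ⟨_, hf.continuous.restrictPreimage (s := U.unop)⟩)
      (LocallyConstant.comap_bijective_of_isQuotientMap
        (hf.restrictPreimage_isOpen U.unop.isOpen)
        fun y ↦ (hfib y).preimage_restrictPreimage _ y)).toModuleIso)
    fun _ ↦ rfl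

end TopCat

open CategoryTheory.Limits in
/-- Let `A, B ⊆ ℝⁿ` (`n ≥ 1`) be closed subsets such that the restriction of
the addition map `s : A × B → ℝⁿ` is proper (preimages of compact sets are compact) and has
contractible fibers over `A + B`. Then `A + B` is closed, and the pushforward along `s|_{A×B}` of
the constant sheaf `k_{A×B}` is isomorphic to the pushforward along the inclusion `A + B ↪ ℝⁿ`
of the constant sheaf `k_{A+B}`. -/
theorem pushforward_constant_sheaf_add (k : Type) [Field k] (n : ℕ)
    (A B : Set (EuclideanSpace ℝ (Fin n)))
    (hproper : ∀ K : Set (EuclideanSpace ℝ (Fin n)), IsCompact K →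
      IsCompact {p : ↥(A ×ˢ B) | p.1.1 + p.1.2 ∈ K})
    (hfib : ∀ x ∈ {x | ∃ a ∈ A, ∃ b ∈ B, a + b = x},
      ContractibleSpace {p : ↥(A ×ˢ B) // p.1.1 + p.1.2 = x}) :
    IsClosed {x | ∃ a ∈ A, ∃ b ∈ B, a + b = x} ∧
    Nonempty
      (((TopCat.Sheaf.pushforward (ModuleCat.{0} k)
          (TopCat.ofHom ⟨fun p => p.1.1 + p.1.2, by fun_prop⟩ :
            TopCat.of ↥(A ×ˢ B) ⟶ TopCat.of (EuclideanSpace ℝ (Fin n)))).obj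
        ((constantSheaf (Opens.grothendieckTopology (TopCat.of ↥(A ×ˢ B)))
          (ModuleCat.{0} k)).obj (ModuleCat.of k k)))
      ≅ ((TopCat.Sheaf.pushforward (ModuleCat.{0} k)
          (TopCat.ofHom ⟨fun p => p.1, by fun_prop⟩ :
            TopCat.of ↥{x | ∃ a ∈ A, ∃ b ∈ B, a + b = x} ⟶
              TopCat.of (EuclideanSpace ℝ (Fin n)))).obj
        ((constantSheaf
          (Opens.grothendieckTopology (TopCat.of ↥{x | ∃ a ∈ A, ∃ b ∈ B, a + b = x}))
          (ModuleCat.{0} k)).obj (ModuleCat.of k k)))) := by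
  set Z := {x | ∃ a ∈ A, ∃ b ∈ B, a + b = x}
  let t : C(↥(A ×ˢ B), ↥Z) :=
    ⟨fun p ↦ ⟨p.1.1 + p.1.2, p.1.1, p.2.1, p.1.2, p.2.2, rfl⟩, by fun_prop⟩
  have hadd_proper : IsProperMap (Subtype.val ∘ t) :=
    isProperMap_iff_isCompact_preimage.2 ⟨by fun_prop, hproper⟩
  have ht_surj : Function.Surjective t := fun z ↦
    have := hfib z z.2
    let ⟨p, hp⟩ := Classical.arbitrary {p : ↥(A ×ˢ B) // p.1.1 + p.1.2 = z}
    ⟨p, Subtype.ext hp⟩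
  have ht_fib : ∀ z, IsPreconnected (t ⁻¹' {z}) := fun z ↦ by
    have := hfib z z.2
    convert isPreconnected_range
      (continuous_subtype_val (p := fun p : ↥(A ×ˢ B) ↦ p.1.1 + p.1.2 = z))
    ext p
    simp [t, Subtype.ext_iff]
  have ht_quot : IsQuotientMap t :=
    (isProperMap_of_comp_of_inj t.continuous continuous_subtype_val hadd_proper
      Subtype.val_injective).isClosedMap.isQuotientMap t.continuous ht_surj
  let i : C(↥Z, EuclideanSpace ℝ (Fin n)) := ⟨Subtype.val, continuous_subtype_val⟩
  refine ⟨?_, ⟨?_⟩⟩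
  · rw [← Subtype.range_coe (s := Z), ← ht_surj.range_comp]
    exact hadd_proper.isClosed_range
  · -- the addition map is `t ≫ i` definitionally
    exact (TopCat.Sheaf.pushforward _ (TopCat.ofHom t ≫ TopCat.ofHom i)).mapIso
        (TopCat.constantSheafIsoLocallyConstantSheaf k k _) ≪≫
      (TopCat.Sheaf.pushforward _ (TopCat.ofHom i)).mapIso
        ((TopCat.locallyConstantSheafIsoPushforward k k (TopCat.ofHom t) ht_quot ht_fib).symm ≪≫
          (TopCat.constantSheafIsoLocallyConstantSheaf k k _).symm)
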